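/- At every solution of the mean field equations the two variational functionals agree and take the explicit value: if (μ1, μ2) ∈ (−1,1)² satisfies μ1 = tanh(J11 α μ1 + J12 (1−α) μ2 + h1) and μ2 = tanh(J12 α μ1 + J22 (1−α) μ2 + h2), then p_UP(μ1, μ2) = p_LOW(μ1, μ2) = −(1/2)·(J11 α² μ1² + 2 J12 α(1−α) μ1 μ2 + J22 (1−α)² μ2²) − (α/2)·log((1−μ1²)/4) − ((1−α)/2)·log((1−μ2²)/4). -/

import Mathlib

open Real Filter

noncomputable def spin (b : Bool) : ℝ := if b then 1 else -1

/-- Binary entropy term; `Real.log 0 = 0` gives the continuous extension `I(±1) = 0`. -/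
noncomputable def entI (μ : ℝ) : ℝ :=
  -((1 + μ) / 2) * Real.log ((1 + μ) / 2) - ((1 - μ) / 2) * Real.log ((1 - μ) / 2)

/-- The upper-bound variational functional `p_UP`. -/
noncomputable def pUP (J11 J12 J22 h1 h2 α μ1 μ2 : ℝ) : ℝ :=
  Real.log 2
    - (1 / 2) * (J11 * α ^ 2 * μ1 ^ 2 + 2 * J12 * α * (1 - α) * μ1 * μ2
        + J22 * (1 - α) ^ 2 * μ2 ^ 2)
    + α * Real.log (Real.cosh (J11 * α * μ1 + J12 * (1 - α) * μ2 + h1))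
    + (1 - α) * Real.log (Real.cosh (J12 * α * μ1 + J22 * (1 - α) * μ2 + h2))

/-- The lower-bound variational functional `p_LOW`. -/
noncomputable def pLOW (J11 J12 J22 h1 h2 α μ1 μ2 : ℝ) : ℝ :=
  (1 / 2) * (J11 * α ^ 2 * μ1 ^ 2 + 2 * J12 * α * (1 - α) * μ1 * μ2
      + J22 * (1 - α) ^ 2 * μ2 ^ 2)
    + α * h1 * μ1 + (1 - α) * h2 * μ2 + α * entI μ1 + (1 - α) * entI μ2

/-! At a solution each magnetisation is `μ = tanh x` for its effective field `x`, and then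
`(1 ± μ) / 2 = exp (± x) / (2 cosh x)`. Hence `I (tanh x) = log (2 cosh x) - x tanh x` and
`log ((1 - μ²) / 4) = -2 log (2 cosh x)`; summing `x μ` over the two species gives back the
quadratic form plus the field terms, and both identities reduce to ring arithmetic. -/

namespace Real

theorem one_add_tanh_div_two (x : ℝ) : (1 + tanh x) / 2 = exp x / (2 * cosh x) := by
  rw [tanh_eq_sinh_div_cosh, ← cosh_add_sinh]
  field_simp [(cosh_pos x).ne']

theorem log_one_add_tanh_div_two (x : ℝ) :
    log ((1 + tanh x) / 2) = x - log (2 * cosh x) := by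
  rw [one_add_tanh_div_two, log_div (exp_ne_zero x) (by positivity), log_exp]

theorem log_one_sub_tanh_div_two (x : ℝ) :
    log ((1 - tanh x) / 2) = -x - log (2 * cosh x) := by
  simpa [sub_eq_add_neg] using log_one_add_tanh_div_two (-x)

theorem log_one_sub_tanh_sq_div_four (x : ℝ) :
    log ((1 - tanh x ^ 2) / 4) = -2 * log (2 * cosh x) := by
  have hfactor : (1 - tanh x ^ 2) / 4 = (1 + tanh x) / 2 * ((1 - tanh x) / 2) := by ring
  have hpos : 0 < (1 + tanh x) / 2 := by linarith [neg_one_lt_tanh x]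
  have hneg : 0 < (1 - tanh x) / 2 := by linarith [tanh_lt_one x]
  rw [hfactor, log_mul hpos.ne' hneg.ne', log_one_add_tanh_div_two, log_one_sub_tanh_div_two]
  ring

theorem log_two_mul_cosh (x : ℝ) : log (2 * cosh x) = log 2 + log (cosh x) :=
  log_mul two_ne_zero (cosh_pos x).ne'

end Real

theorem entI_tanh (x : ℝ) : entI (tanh x) = log (2 * cosh x) - x * tanh x := by
  rw [entI, log_one_add_tanh_div_two, log_one_sub_tanh_div_two]
  ring

theorem pUP_eq_pLOW_at_mean_field_solutions_general
    (J11 J12 J22 h1 h2 α : ℝ)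
    (μ1 μ2 : ℝ)
    (hmf1 : μ1 = Real.tanh (J11 * α * μ1 + J12 * (1 - α) * μ2 + h1))
    (hmf2 : μ2 = Real.tanh (J12 * α * μ1 + J22 * (1 - α) * μ2 + h2)) :
    pUP J11 J12 J22 h1 h2 α μ1 μ2 = pLOW J11 J12 J22 h1 h2 α μ1 μ2 ∧
    pLOW J11 J12 J22 h1 h2 α μ1 μ2 =
      -(1 / 2) * (J11 * α ^ 2 * μ1 ^ 2 + 2 * J12 * α * (1 - α) * μ1 * μ2
          + J22 * (1 - α) ^ 2 * μ2 ^ 2)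
        - (α / 2) * Real.log ((1 - μ1 ^ 2) / 4)
        - ((1 - α) / 2) * Real.log ((1 - μ2 ^ 2) / 4) := by
  have hent1 := entI_tanh (J11 * α * μ1 + J12 * (1 - α) * μ2 + h1)
  have hent2 := entI_tanh (J12 * α * μ1 + J22 * (1 - α) * μ2 + h2)
  have hlog1 := log_one_sub_tanh_sq_div_four (J11 * α * μ1 + J12 * (1 - α) * μ2 + h1)
  have hlog2 := log_one_sub_tanh_sq_div_four (J12 * α * μ1 + J22 * (1 - α) * μ2 + h2)
  rw [← hmf1] at hent1 hlog1
  rw [← hmf2] at hent2 hlog2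
  constructor
  · rw [pUP, pLOW, hent1, hent2, log_two_mul_cosh, log_two_mul_cosh]
    ring
  · rw [pLOW, hent1, hent2, hlog1, hlog2]
    ring

/-- at every solution of the mean field equations the two
variational functionals agree and take the explicit value. -/
theorem pUP_eq_pLOW_at_mean_field_solutions
    (J11 J12 J22 h1 h2 α : ℝ) (hJ11 : 0 < J11) (hJ22 : 0 < J22)
    (hα : α ∈ Set.Ioo (0 : ℝ) 1)
    (μ1 μ2 : ℝ) (hμ1 : μ1 ∈ Set.Ioo (-1 : ℝ) 1) (hμ2 : μ2 ∈ Set.Ioo (-1 : ℝ) 1)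
    (hmf1 : μ1 = Real.tanh (J11 * α * μ1 + J12 * (1 - α) * μ2 + h1))
    (hmf2 : μ2 = Real.tanh (J12 * α * μ1 + J22 * (1 - α) * μ2 + h2)) :
    pUP J11 J12 J22 h1 h2 α μ1 μ2 = pLOW J11 J12 J22 h1 h2 α μ1 μ2 ∧
    pLOW J11 J12 J22 h1 h2 α μ1 μ2 =
      -(1 / 2) * (J11 * α ^ 2 * μ1 ^ 2 + 2 * J12 * α * (1 - α) * μ1 * μ2
          + J22 * (1 - α) ^ 2 * μ2 ^ 2)
        - (α / 2) * Real.log ((1 - μ1 ^ 2) / 4)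
        - ((1 - α) / 2) * Real.log ((1 - μ2 ^ 2) / 4) :=
  pUP_eq_pLOW_at_mean_field_solutions_general J11 J12 J22 h1 h2 α μ1 μ2 hmf1 hmf2
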